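/- arXiv:1912.02938 — 3 statements merged into one kernel-verified Lean document; each statement's English description precedes it below -/
import Mathlib

section
/- Let A be an m×n real matrix with orthonormal rows (i.e., A Aᵀ = I_m), and let A' be an m×n real matrix each of whose entries differs from the corresponding entry of A by at most 2^{-b} (e.g., A' is obtained from A by rounding each entry to b bits). Then for every vector v ∈ ℝⁿ there exists a vector s ∈ ℝⁿ such that A'v = A(v - s) and ‖s‖₂ ≤ n·2^{-b}·‖v‖₂. -/
open Matrix

/-- Discretization lemma: if `A` has orthonormal rows and `A'` agrees with `A`
entrywise up to `2^{-b}`, then for every `v` there is `s` with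
`A' v = A (v - s)` and `‖s‖₂ ≤ n 2^{-b} ‖v‖₂`. -/
theorem discretization (m n : ℕ) (hmn : m ≤ n) (b : ℕ)
    (A A' : Matrix (Fin m) (Fin n) ℝ)
    (hA : A * Aᵀ = 1)
    (hA' : ∀ i j, |A' i j - A i j| ≤ (2 : ℝ) ^ (-(b : ℤ))) :
    ∀ v : EuclideanSpace ℝ (Fin n), ∃ s : EuclideanSpace ℝ (Fin n),
      A'.mulVec v = A.mulVec (v - s) ∧
      ‖s‖ ≤ (n : ℝ) * (2 : ℝ) ^ (-(b : ℤ)) * ‖v‖ := by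
  intro v
  set ε : ℝ := (2 : ℝ) ^ (-(b : ℤ)) with hε
  have hε0 : 0 ≤ ε := by positivity
  set w : Fin m → ℝ := (A - A').mulVec v with hw
  refine ⟨(WithLp.equiv 2 (Fin n → ℝ)).symm (Aᵀ.mulVec w), ?_, ?_⟩
  · have h1 : A.mulVec (Aᵀ.mulVec w) = w := by
      rw [mulVec_mulVec, hA, one_mulVec]
    show A'.mulVec v = A.mulVec ((WithLp.equiv 2 (Fin n → ℝ)) v - Aᵀ.mulVec w)
    have hv : (WithLp.equiv 2 (Fin n → ℝ)) v = v := rfl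
    rw [mulVec_sub, h1, hw, sub_mulVec, hv]
    abel
  · -- norm equality
    have hsq : ∑ j, (Aᵀ.mulVec w) j ^ 2 = ∑ i, w i ^ 2 := by
      have h1 : (Aᵀ.mulVec w) ⬝ᵥ (Aᵀ.mulVec w) = w ⬝ᵥ w := by
        rw [dotProduct_mulVec, vecMul_transpose, mulVec_mulVec, hA, one_mulVec]
      simpa [dotProduct, sq] using h1
    have hnorms : ‖(WithLp.equiv 2 (Fin n → ℝ)).symm (Aᵀ.mulVec w)‖
        = Real.sqrt (∑ i, w i ^ 2) := by
      rw [EuclideanSpace.norm_eq]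
      congr 1
      rw [← hsq]
      simp [sq_abs]
    have hnormv : ‖v‖ = Real.sqrt (∑ j, v j ^ 2) := by
      rw [EuclideanSpace.norm_eq]
      congr 1
      simp [sq_abs]
    have hvsum : (∑ j, |v j|) ^ 2 ≤ (n : ℝ) * ∑ j, v j ^ 2 := by
      simpa [sq_abs] using
        sq_sum_le_card_mul_sum_sq (s := Finset.univ) (f := fun j => |v j|)
    have hwbd : ∀ i, |w i| ≤ ε * ∑ j, |v j| := by
      intro i
      calc |w i| = |∑ j, (A - A') i j * v j| := by simp [hw, mulVec, dotProduct]
        _ ≤ ∑ j, |(A - A') i j * v j| := Finset.abs_sum_le_sum_abs _ _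
        _ ≤ ∑ j, ε * |v j| := by
            refine Finset.sum_le_sum fun j _ => ?_
            rw [abs_mul]
            have : |(A - A') i j| ≤ ε := by
              simpa [abs_sub_comm] using hA' i j
            exact mul_le_mul_of_nonneg_right this (abs_nonneg _)
        _ = ε * ∑ j, |v j| := by rw [Finset.mul_sum]
    have hsum : ∑ i, w i ^ 2 ≤ (m : ℝ) * (ε ^ 2 * ((n : ℝ) * ∑ j, v j ^ 2)) := by
      calc ∑ i, w i ^ 2 ≤ ∑ _i : Fin m, (ε * ∑ j, |v j|) ^ 2 := by
            refine Finset.sum_le_sum fun i _ => ?_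
            rw [← sq_abs (w i)]
            exact pow_le_pow_left₀ (abs_nonneg _) (hwbd i) 2
        _ = (m : ℝ) * (ε * ∑ j, |v j|) ^ 2 := by simp [mul_comm]
        _ ≤ (m : ℝ) * (ε ^ 2 * ((n : ℝ) * ∑ j, v j ^ 2)) := by
            rw [mul_pow]
            refine mul_le_mul_of_nonneg_left ?_ (Nat.cast_nonneg m)
            exact mul_le_mul_of_nonneg_left hvsum (by positivity)
    rw [hnorms, hnormv]
    have h2 : Real.sqrt (∑ i, w i ^ 2)
        ≤ Real.sqrt ((n : ℝ) * (ε ^ 2 * ((n : ℝ) * ∑ j, v j ^ 2))) := by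
      refine Real.sqrt_le_sqrt (hsum.trans ?_)
      refine mul_le_mul_of_nonneg_right ?_ (by positivity)
      exact_mod_cast hmn
    refine h2.trans_eq ?_
    rw [show (n : ℝ) * (ε ^ 2 * ((n : ℝ) * ∑ j, v j ^ 2))
        = ((n : ℝ) * ε) ^ 2 * ∑ j, v j ^ 2 by ring,
      Real.sqrt_mul (by positivity), Real.sqrt_sq (by positivity)]
end

section
/- There exist absolute constants c > 0 and C ≥ 1 such that the following holds. For all positive integers n, k with k dividing n and k even, and all positive reals L, r, R with Lr ≥ R, there exist a (C·L)-Lipschitz function G : ℝᵏ → ℝⁿ and a finite set X ⊆ B_k(r) (the closed ball of radius r in ℝᵏ) with |X| ≥ (min(e^{c·n/k}, Lr/R))^{k/2}, such that G(x) ∈ B_n(R) for every x ∈ X, and ‖G(x) - G(x')‖₂ ≥ R/√6 for all distinct x, x' ∈ X. -/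
open Metric MeasureTheory Module Set Finset
open scoped ENNReal

lemma packing_lemma (k : ℕ) (r d : ℝ) (hr : 0 < r) (hd : 0 < d) :
    ∃ S : Finset (EuclideanSpace ℝ (Fin k)),
      (∀ x ∈ S, ‖x‖ ≤ r) ∧
      (∀ x ∈ S, ∀ y ∈ S, x ≠ y → d ≤ ‖x - y‖) ∧
      (r / d) ^ k ≤ (S.card : ℝ) := by
  classical
  set E := EuclideanSpace ℝ (Fin k)
  set P : Finset E → Prop := fun S =>
    (∀ x ∈ S, ‖x‖ ≤ r) ∧ (∀ x ∈ S, ∀ y ∈ S, x ≠ y → d ≤ ‖x - y‖) with hP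
  set V : ℝ≥0∞ := volume (ball (0 : E) 1) with hV
  have hV0 : V ≠ 0 := (measure_ball_pos _ _ one_pos).ne'
  have hVtop : V ≠ ⊤ := measure_ball_lt_top.ne
  have hvol : ∀ ρ : ℝ, 0 < ρ → volume (ball (0 : E) ρ) = ENNReal.ofReal (ρ ^ k) * V := by
    intro ρ hρ
    rw [Measure.addHaar_ball_of_pos _ _ hρ, finrank_euclideanSpace_fin]
  -- cardinality bound for separated sets
  have hbound : ∀ S : Finset E, P S →
      (S.card : ℝ≥0∞) * volume (ball (0 : E) (d / 2)) ≤
        volume (closedBall (0 : E) (r + d)) := by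
    intro S hS
    have hdisj : (↑S : Set E).PairwiseDisjoint (fun x => ball x (d / 2)) := by
      intro x hx y hy hxy
      apply Set.disjoint_left.2
      intro z hzx hzy
      have : d ≤ ‖x - y‖ := hS.2 x hx y hy hxy
      have h1 : dist x y < d := by
        calc dist x y ≤ dist x z + dist z y := dist_triangle x z y
        _ < d / 2 + d / 2 := by
            rw [dist_comm x z]
            exact add_lt_add hzx hzy
        _ = d := by ring
      rw [dist_eq_norm] at h1; linarith
    have hsub : ∀ x ∈ S, ball x (d / 2) ⊆ closedBall (0 : E) (r + d) := by
      intro x hx z hz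
      rw [mem_ball, dist_eq_norm] at hz
      rw [mem_closedBall_zero_iff]
      have hzd : z = (z - x) + x := by abel
      calc ‖z‖ = ‖(z - x) + x‖ := by rw [← hzd]
        _ ≤ ‖z - x‖ + ‖x‖ := norm_add_le _ _
        _ ≤ d / 2 + r := add_le_add hz.le (hS.1 x hx)
        _ ≤ r + d := by linarith
    calc (S.card : ℝ≥0∞) * volume (ball (0 : E) (d / 2))
        = ∑ x ∈ S, volume (ball x (d / 2)) := by
          rw [Finset.sum_congr rfl (fun x _ => Measure.addHaar_ball_center volume x (d/2)),
            Finset.sum_const, nsmul_eq_mul]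
      _ = volume (⋃ x ∈ S, ball x (d / 2)) :=
          (measure_biUnion_finset hdisj (fun x _ => measurableSet_ball)).symm
      _ ≤ volume (closedBall (0 : E) (r + d)) :=
          measure_mono (Set.iUnion₂_subset hsub)
  have hvb0 : volume (ball (0 : E) (d / 2)) ≠ 0 := (measure_ball_pos _ _ (by linarith)).ne'
  have hcbtop : volume (closedBall (0 : E) (r + d)) ≠ ⊤ := measure_closedBall_lt_top.ne
  set B : ℕ := Nat.ceil (volume (closedBall (0 : E) (r + d)) / volume (ball (0 : E) (d / 2))).toReal with hB
  have hcard_le : ∀ S : Finset E, P S → S.card ≤ B := by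
    intro S hS
    have h1 : (S.card : ℝ≥0∞) ≤
        volume (closedBall (0 : E) (r + d)) / volume (ball (0 : E) (d / 2)) :=
      (ENNReal.le_div_iff_mul_le (Or.inl hvb0) (Or.inl measure_ball_lt_top.ne)).2 (hbound S hS)
    have h2 : ((S.card : ℝ≥0∞)).toReal ≤
        (volume (closedBall (0 : E) (r + d)) / volume (ball (0 : E) (d / 2))).toReal :=
      ENNReal.toReal_mono ((ENNReal.div_lt_top hcbtop hvb0).ne) h1
    rw [ENNReal.toReal_natCast] at h2
    exact_mod_cast h2.trans (Nat.le_ceil _)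
  -- maximal separated set
  set A : Set ℕ := {m | ∃ S : Finset E, P S ∧ S.card = m} with hA
  have hA0 : 0 ∈ A := ⟨∅, ⟨by simp, by simp⟩, rfl⟩
  have hAbdd : BddAbove A := ⟨B, fun m ⟨S, hS, hc⟩ => hc ▸ hcard_le S hS⟩
  obtain ⟨S, hSP, hScard⟩ : ∃ S : Finset E, P S ∧ S.card = sSup A :=
    Nat.sSup_mem ⟨0, hA0⟩ hAbdd
  -- maximality gives covering
  have hcover : ∀ p : E, ‖p‖ ≤ r → ∃ x ∈ S, ‖p - x‖ < d := by
    intro p hp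
    by_contra hcon
    push_neg at hcon
    have hpS : p ∉ S := by
      intro hpp
      have := hcon p hpp
      simp at this
      linarith
    have hins : P (insert p S) := by
      constructor
      · intro x hx
        rcases Finset.mem_insert.1 hx with h | h
        · exact h ▸ hp
        · exact hSP.1 x h
      · intro x hx y hy hxy
        rcases Finset.mem_insert.1 hx with h1 | h1 <;>
          rcases Finset.mem_insert.1 hy with h2 | h2
        · exact absurd (h1.trans h2.symm) hxy
        · exact h1 ▸ hcon y h2
        · rw [← neg_sub, norm_neg]
          exact h2 ▸ hcon x h1
        · exact hSP.2 x h1 y h2 hxy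
    have hmem : (insert p S).card ∈ A := ⟨insert p S, hins, rfl⟩
    have := le_csSup hAbdd hmem
    rw [Finset.card_insert_of_notMem hpS, hScard] at this
    omega
  -- volume lower bound on card
  have hvle : volume (ball (0 : E) r) ≤ (S.card : ℝ≥0∞) * volume (ball (0 : E) d) := by
    calc volume (ball (0 : E) r) ≤ volume (⋃ x ∈ S, ball x d) := by
          apply measure_mono
          intro p hp
          rw [mem_ball_zero_iff] at hp
          obtain ⟨x, hx, hpx⟩ := hcover p hp.le
          exact Set.mem_biUnion hx (by rw [mem_ball, dist_eq_norm]; exact hpx)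
      _ ≤ ∑ x ∈ S, volume (ball x d) := measure_biUnion_finset_le S _
      _ = (S.card : ℝ≥0∞) * volume (ball (0 : E) d) := by
          rw [Finset.sum_congr rfl (fun x _ => Measure.addHaar_ball_center volume x d),
            Finset.sum_const, nsmul_eq_mul]
  rw [hvol r hr, hvol d hd, ← mul_assoc] at hvle
  have h3 : ENNReal.ofReal (r ^ k) ≤ (S.card : ℝ≥0∞) * ENNReal.ofReal (d ^ k) :=
    (ENNReal.mul_le_mul_iff_left hV0 hVtop).1 hvle
  rw [← ENNReal.ofReal_natCast S.card,
    ← ENNReal.ofReal_mul (Nat.cast_nonneg _)] at h3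
  have h4 : r ^ k ≤ (S.card : ℝ) * d ^ k :=
    (ENNReal.ofReal_le_ofReal_iff (mul_nonneg (Nat.cast_nonneg _) (pow_pos hd k).le)).1 h3
  refine ⟨S, hSP.1, hSP.2, ?_⟩
  rw [div_pow, div_le_iff₀ (pow_pos hd k)]
  linarith

lemma bump_lemma {k n : ℕ} (X : Finset (EuclideanSpace ℝ (Fin k)))
    (v : EuclideanSpace ℝ (Fin k) → EuclideanSpace ℝ (Fin n))
    (ρ B : ℝ) (hρ : 0 < ρ) (hB : 0 ≤ B)
    (hsep : ∀ x ∈ X, ∀ y ∈ X, x ≠ y → 2 * ρ ≤ ‖x - y‖)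
    (hv : ∀ x ∈ X, ‖v x‖ ≤ B) :
    (∀ x ∈ X, (∑ p ∈ X, (max 0 (1 - ‖x - p‖ / ρ)) • v p) = v x) ∧
    (∀ z w : EuclideanSpace ℝ (Fin k),
      ‖(∑ p ∈ X, (max 0 (1 - ‖z - p‖ / ρ)) • v p) -
       (∑ p ∈ X, (max 0 (1 - ‖w - p‖ / ρ)) • v p)‖ ≤ 2 * B / ρ * ‖z - w‖) := by
  classical
  set φ : EuclideanSpace ℝ (Fin k) → EuclideanSpace ℝ (Fin k) → ℝ :=
    fun y p => max 0 (1 - ‖y - p‖ / ρ) with hφ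
  have hφ0 : ∀ y p, ρ ≤ ‖y - p‖ → φ y p = 0 := by
    intro y p h
    have : 1 - ‖y - p‖ / ρ ≤ 0 := by
      rw [sub_nonpos, le_div_iff₀ hρ, one_mul]; exact h
    exact max_eq_left this
  constructor
  · intro x hx
    rw [Finset.sum_eq_single_of_mem x hx]
    · show (max 0 (1 - ‖x - x‖ / ρ)) • v x = v x
      rw [sub_self, norm_zero, zero_div, sub_zero, max_eq_right zero_le_one, one_smul]
    · intro p hp hpx
      have h2 : 2 * ρ ≤ ‖x - p‖ := hsep x hx p hp (Ne.symm hpx)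
      have h0 : φ x p = 0 := hφ0 x p (by linarith)
      show φ x p • v p = 0
      rw [h0, zero_smul]
  · intro z w
    have hlip : ∀ p, |φ z p - φ w p| ≤ ‖z - w‖ / ρ := by
      intro p
      have h1 : |φ z p - φ w p| ≤ |(1 - ‖z - p‖ / ρ) - (1 - ‖w - p‖ / ρ)| := by
        rw [hφ]
        simpa [max_comm] using
          abs_max_sub_max_le_abs (1 - ‖z - p‖ / ρ) (1 - ‖w - p‖ / ρ) 0
      have h2 : (1 - ‖z - p‖ / ρ) - (1 - ‖w - p‖ / ρ) = (‖w - p‖ - ‖z - p‖) / ρ := by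
        ring
      have h3 : |‖w - p‖ - ‖z - p‖| ≤ ‖w - z‖ := by
        have h := abs_norm_sub_norm_le (w - p) (z - p)
        have he : (w - p) - (z - p) = w - z := by abel
        rw [he] at h
        exact h
      calc |φ z p - φ w p| ≤ |(‖w - p‖ - ‖z - p‖) / ρ| := by rw [← h2]; exact h1
        _ = |‖w - p‖ - ‖z - p‖| / ρ := by rw [abs_div, abs_of_pos hρ]
        _ ≤ ‖w - z‖ / ρ := by gcongr
        _ = ‖z - w‖ / ρ := by rw [norm_sub_rev]
    set T : Finset (EuclideanSpace ℝ (Fin k)) :=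
      X.filter (fun p => ‖z - p‖ < ρ ∨ ‖w - p‖ < ρ) with hT
    have hTcard : T.card ≤ 2 := by
      have hsub : T ⊆ (X.filter fun p => ‖z - p‖ < ρ) ∪ (X.filter fun p => ‖w - p‖ < ρ) := by
        intro p hp
        rw [hT, Finset.mem_filter] at hp
        rcases hp.2 with h | h
        · exact Finset.mem_union_left _ (Finset.mem_filter.2 ⟨hp.1, h⟩)
        · exact Finset.mem_union_right _ (Finset.mem_filter.2 ⟨hp.1, h⟩)
      have hone : ∀ y : EuclideanSpace ℝ (Fin k),
          (X.filter fun p => ‖y - p‖ < ρ).card ≤ 1 := by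
        intro y
        rw [Finset.card_le_one]
        intro p hp q hq
        rw [Finset.mem_filter] at hp hq
        by_contra hpq
        have hs := hsep p hp.1 q hq.1 hpq
        have : ‖p - q‖ ≤ ‖y - p‖ + ‖y - q‖ := by
          have he : p - q = -(y - p) + (y - q) := by abel
          calc ‖p - q‖ = ‖-(y - p) + (y - q)‖ := by rw [← he]
            _ ≤ ‖-(y - p)‖ + ‖y - q‖ := norm_add_le _ _
            _ = ‖y - p‖ + ‖y - q‖ := by rw [norm_neg]
        linarith [hp.2, hq.2]
      calc T.card ≤ _ := Finset.card_le_card hsub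
        _ ≤ _ + _ := Finset.card_union_le _ _
        _ ≤ 1 + 1 := add_le_add (hone z) (hone w)
    have hsum : (∑ p ∈ X, φ z p • v p) - (∑ p ∈ X, φ w p • v p)
        = ∑ p ∈ T, (φ z p - φ w p) • v p := by
      rw [← Finset.sum_sub_distrib]
      rw [Finset.sum_subset (Finset.filter_subset _ X)]
      · exact Finset.sum_congr rfl (fun p _ => (sub_smul _ _ _).symm)
      · intro p hp hnp
        rw [Finset.mem_filter] at hnp
        push_neg at hnp
        have h1 := hφ0 z p (hnp hp).1
        have h2 := hφ0 w p (hnp hp).2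
        rw [h1, h2, sub_zero, zero_smul]
    show ‖(∑ p ∈ X, φ z p • v p) - (∑ p ∈ X, φ w p • v p)‖ ≤ 2 * B / ρ * ‖z - w‖
    rw [hsum]
    calc ‖∑ p ∈ T, (φ z p - φ w p) • v p‖
        ≤ ∑ p ∈ T, ‖(φ z p - φ w p) • v p‖ := norm_sum_le _ _
      _ ≤ ∑ _p ∈ T, (‖z - w‖ / ρ * B) := by
          apply Finset.sum_le_sum
          intro p hp
          rw [norm_smul, Real.norm_eq_abs]
          have hpX : p ∈ X := Finset.filter_subset _ _ hp
          exact mul_le_mul (hlip p) (hv p hpX) (norm_nonneg _)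
            (div_nonneg (norm_nonneg _) hρ.le)
      _ = T.card * (‖z - w‖ / ρ * B) := by rw [Finset.sum_const, nsmul_eq_mul]
      _ ≤ 2 * (‖z - w‖ / ρ * B) := by
          apply mul_le_mul_of_nonneg_right _ (by positivity)
          exact_mod_cast hTcard
      _ = 2 * B / ρ * ‖z - w‖ := by ring

/-- There are absolute constants `c > 0` and `C ≥ 1` such that for all positive
integers `n, k` with `k ∣ n` and `k` even, and positive reals `L, r, R` with
`Lr ≥ R`, there is a `(C·L)`-Lipschitz map `G : ℝᵏ → ℝⁿ` and a set
`X ⊆ B_k(r)` of `(min(e^{cn/k}, Lr/R))^{k/2}` points whose images under `G`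
lie in `B_n(R)` and are pairwise `R/√6`-separated. -/
theorem lipschitz_well_separated_net :
    ∃ c : ℝ, 0 < c ∧ ∃ C : ℝ, 1 ≤ C ∧
      ∀ n k : ℕ, 0 < n → 0 < k → k ∣ n → Even k →
        ∀ L r R : ℝ, 0 < L → 0 < r → 0 < R → R ≤ L * r →
          ∃ G : EuclideanSpace ℝ (Fin k) → EuclideanSpace ℝ (Fin n),
          ∃ X : Finset (EuclideanSpace ℝ (Fin k)),
            (∀ x y : EuclideanSpace ℝ (Fin k), ‖G x - G y‖ ≤ C * L * ‖x - y‖) ∧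
            (∀ x ∈ X, ‖x‖ ≤ r) ∧
            (min (Real.exp (c * n / k)) (L * r / R)) ^ (k / 2) ≤ (X.card : ℝ) ∧
            (∀ x ∈ X, ‖G x‖ ≤ R) ∧
            (∀ x ∈ X, ∀ x' ∈ X, x ≠ x' → R / Real.sqrt 6 ≤ ‖G x - G x'‖) := by
  classical
  refine ⟨1, one_pos, 4, by norm_num, ?_⟩
  intro n k hn hk hdvd hkeven L r R hL hr hR hLR
  have hk0 : (k : ℝ) ≠ 0 := Nat.cast_ne_zero.2 hk.ne'
  set t : ℝ := L * r / R with ht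
  have ht1 : 1 ≤ t := (one_le_div hR).2 hLR
  set m : ℝ := min (Real.exp (1 * n / k)) (L * r / R) with hm
  have hm0 : 0 ≤ m := le_min (Real.exp_pos _).le (by positivity)
  -- domain packing
  obtain ⟨S₁, hS₁ball, hS₁sep, hS₁card⟩ := packing_lemma k r (R / L) hr (div_pos hR hL)
  have hrd : r / (R / L) = t := by
    rw [ht]; field_simp
  rw [hrd] at hS₁card
  -- image packing
  have h6 : (0:ℝ) < Real.sqrt 6 := Real.sqrt_pos.2 (by norm_num)
  obtain ⟨S₂, hS₂ball, hS₂sep, hS₂card⟩ :=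
    packing_lemma n R (R / Real.sqrt 6) hR (div_pos hR h6)
  have hRd : R / (R / Real.sqrt 6) = Real.sqrt 6 := by
    field_simp
  rw [hRd] at hS₂card
  -- cardinality bounds
  have hm_dom : m ^ (k / 2) ≤ (S₁.card : ℝ) := by
    calc m ^ (k / 2) ≤ t ^ (k / 2) :=
          pow_le_pow_left₀ hm0 (min_le_right _ _) _
      _ ≤ t ^ k := pow_le_pow_right₀ ht1 (Nat.div_le_self k 2)
      _ ≤ _ := hS₁card
  have hm_img : m ^ (k / 2) ≤ (S₂.card : ℝ) := by
    obtain ⟨j, hj⟩ := hkeven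
    have hk2 : k / 2 = j := by omega
    have hjk : (k : ℝ) = 2 * j := by rw [hj]; push_cast; ring
    have hj0 : (j : ℝ) ≠ 0 := by
      intro h
      rw [hj] at hk
      simp only [Nat.cast_eq_zero] at h
      omega
    calc m ^ (k / 2) ≤ Real.exp (1 * n / k) ^ (k / 2) :=
          pow_le_pow_left₀ hm0 (min_le_left _ _) _
      _ = Real.exp ((k / 2 : ℕ) * (1 * n / k)) := (Real.exp_nat_mul _ _).symm
      _ = Real.exp ((n : ℝ) * (1 / 2)) := by
          rw [hk2, hjk]
          congr 1
          field_simp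
      _ = Real.exp (1 / 2) ^ n := Real.exp_nat_mul _ _
      _ ≤ Real.sqrt 6 ^ n := by
          apply pow_le_pow_left₀ (Real.exp_pos _).le
          rw [Real.le_sqrt (Real.exp_pos _).le (by norm_num)]
          have hsq : Real.exp (1 / 2) ^ 2 = Real.exp 1 := by
            rw [← Real.exp_nat_mul]
            norm_num
          rw [hsq]
          have := Real.exp_one_lt_d9
          linarith
      _ ≤ _ := hS₂card
  -- choose X and Y and the bijection
  set N : ℕ := min S₁.card S₂.card with hN
  obtain ⟨X, hXsub, hXcard⟩ := Finset.exists_subset_card_eq (min_le_left S₁.card S₂.card)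
  obtain ⟨Y, hYsub, hYcard⟩ := Finset.exists_subset_card_eq (min_le_right S₁.card S₂.card)
  have hcardeq : Fintype.card X = Fintype.card Y := by
    simp [hXcard, hYcard]
  set e : X ≃ Y := Fintype.equivOfCardEq hcardeq with he
  set v : EuclideanSpace ℝ (Fin k) → EuclideanSpace ℝ (Fin n) :=
    fun x => if h : x ∈ X then ((e ⟨x, h⟩ : Y) : EuclideanSpace ℝ (Fin n)) else 0 with hv
  have hvmem : ∀ x ∈ X, v x ∈ Y := by
    intro x hx
    rw [hv]
    simp only [dif_pos hx]
    exact (e ⟨x, hx⟩).2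
  have hvinj : ∀ x ∈ X, ∀ x' ∈ X, v x = v x' → x = x' := by
    intro x hx x' hx' hvv
    rw [hv] at hvv
    simp only [dif_pos hx, dif_pos hx'] at hvv
    have := e.injective (Subtype.coe_injective hvv)
    exact congrArg Subtype.val this
  have hvnorm : ∀ x ∈ X, ‖v x‖ ≤ R := fun x hx => hS₂ball _ (hYsub (hvmem x hx))
  -- bump construction
  set ρ : ℝ := R / (2 * L) with hρdef
  have hρ : 0 < ρ := by positivity
  have hXsep : ∀ x ∈ X, ∀ y ∈ X, x ≠ y → 2 * ρ ≤ ‖x - y‖ := by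
    intro x hx y hy hxy
    have : 2 * ρ = R / L := by rw [hρdef]; field_simp
    rw [this]
    exact hS₁sep x (hXsub hx) y (hXsub hy) hxy
  obtain ⟨hG1, hG2⟩ := bump_lemma X v ρ R hρ hR.le hXsep hvnorm
  refine ⟨fun z => ∑ p ∈ X, (max 0 (1 - ‖z - p‖ / ρ)) • v p, X, ?_, ?_, ?_, ?_, ?_⟩
  · intro x y
    have h4 : 2 * R / ρ = 4 * L := by rw [hρdef]; field_simp; ring
    calc _ ≤ 2 * R / ρ * ‖x - y‖ := hG2 x y
      _ = 4 * L * ‖x - y‖ := by rw [h4]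
  · exact fun x hx => hS₁ball x (hXsub hx)
  · rw [hXcard]
    have : ((N : ℝ)) = min (S₁.card : ℝ) (S₂.card : ℝ) := by
      rw [hN]; push_cast [Nat.cast_min]; rfl
    rw [this]
    exact le_min hm_dom hm_img
  · intro x hx
    show ‖∑ p ∈ X, (max 0 (1 - ‖x - p‖ / ρ)) • v p‖ ≤ R
    rw [hG1 x hx]
    exact hvnorm x hx
  · intro x hx x' hx' hxx
    show R / Real.sqrt 6 ≤ ‖(∑ p ∈ X, (max 0 (1 - ‖x - p‖ / ρ)) • v p) -
      (∑ p ∈ X, (max 0 (1 - ‖x' - p‖ / ρ)) • v p)‖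
    rw [hG1 x hx, hG1 x' hx']
    refine hS₂sep (v x) (hYsub (hvmem x hx)) (v x') (hYsub (hvmem x' hx')) ?_
    exact fun h => hxx (hvinj x hx x' hx' h)
end

section
/- Let n ≥ 2, ρ > 0, and let s ∈ ℝⁿ be a fixed vector with ‖s‖₂ ≤ ρ/n². Let u be a random vector distributed uniformly on the closed Euclidean ball B_n(ρ) ⊆ ℝⁿ, and let w ∈ ℝⁿ be fixed. Then the total variation distance between the distribution of w - s - u and the distribution of w - u is at most 1/n. -/
open MeasureTheory Metric

/-- For `u` uniform on the ball `B_n(ρ)` (`n ≥ 2`), a fixed shift `s` with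
`‖s‖ ≤ ρ/n²` and a fixed `w`, the total variation distance between the laws of
`w - s - u` and `w - u` is at most `1/n`: for every Borel set `E`,
`|P(w - s - u ∈ E) - P(w - u ∈ E)| ≤ 1/n`. -/
theorem shifted_uniform_tv_dist (n : ℕ) (hn : 2 ≤ n) (ρ : ℝ) (hρ : 0 < ρ)
    (s w : EuclideanSpace ℝ (Fin n)) (hs : ‖s‖ ≤ ρ / (n : ℝ) ^ 2) :
    ∀ E : Set (EuclideanSpace ℝ (Fin n)), MeasurableSet E →
      |((Measure.map (fun u => w - s - u)
          ((volume (closedBall (0 : EuclideanSpace ℝ (Fin n)) ρ))⁻¹ •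
            volume.restrict (closedBall (0 : EuclideanSpace ℝ (Fin n)) ρ))) E).toReal -
       ((Measure.map (fun u => w - u)
          ((volume (closedBall (0 : EuclideanSpace ℝ (Fin n)) ρ))⁻¹ •
            volume.restrict (closedBall (0 : EuclideanSpace ℝ (Fin n)) ρ))) E).toReal|
        ≤ 1 / (n : ℝ) := by
  intro E hE
  have hn0 : (0:ℝ) < n := by positivity
  set B0 := closedBall (0 : EuclideanSpace ℝ (Fin n)) ρ with hB0
  set V := volume B0 with hV
  -- key computation of the mapped measures
  have key : ∀ v : EuclideanSpace ℝ (Fin n),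
      (Measure.map (fun u => v - u) (V⁻¹ • volume.restrict B0)) E
        = V⁻¹ * volume (E ∩ closedBall v ρ) := by
    intro v
    have hf : Measurable fun u : EuclideanSpace ℝ (Fin n) => v - u :=
      measurable_const.sub measurable_id
    rw [Measure.map_smul, Measure.smul_apply, Measure.map_apply hf hE,
        Measure.restrict_apply (hf hE), smul_eq_mul]
    congr 1
    have hset : (fun u => v - u) ⁻¹' E ∩ B0 = (fun u => v - u) ⁻¹' (E ∩ closedBall v ρ) := by
      ext x
      simp only [hB0, Set.mem_inter_iff, Set.mem_preimage, mem_closedBall, dist_eq_norm,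
        sub_zero, sub_sub_cancel_left, norm_neg]
    rw [hset]
    exact (Measure.measurePreserving_sub_left volume v).measure_preimage
      (hE.inter measurableSet_closedBall).nullMeasurableSet
  rw [key (w - s), key w]
  -- notation
  set t := ‖s‖ with ht
  have ht0 : 0 ≤ t := norm_nonneg s
  have hnR : (2:ℝ) ≤ (n:ℝ) := by exact_mod_cast hn
  have hn2 : (1:ℝ) ≤ (n:ℝ)^2 := by nlinarith
  have htn2 : t * (n:ℝ)^2 ≤ ρ := (le_div_iff₀ (by positivity)).1 hs
  have htρ : t ≤ ρ := by nlinarith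
  set B1 := closedBall (w - s) ρ with hB1
  set B2 := closedBall w ρ with hB2
  set W := closedBall w (ρ - t) with hWdef
  have hdim : Module.finrank ℝ (EuclideanSpace ℝ (Fin n)) = n := by simp
  set K := volume (ball (0 : EuclideanSpace ℝ (Fin n)) 1) with hK
  have hvol : ∀ (c : EuclideanSpace ℝ (Fin n)) (r : ℝ), 0 ≤ r →
      volume (closedBall c r) = ENNReal.ofReal (r ^ n) * K := by
    intro c r hr
    rw [Measure.addHaar_closedBall volume c hr, hdim]
  have hVval : V = ENNReal.ofReal (ρ ^ n) * K := hvol 0 ρ hρ.le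
  have hB1V : volume B1 = V := by rw [hB1, hvol _ ρ hρ.le, hVval]
  have hB2V : volume B2 = V := by rw [hB2, hvol _ ρ hρ.le, hVval]
  have hWval : volume W = ENNReal.ofReal ((ρ - t) ^ n) * K := hvol w (ρ - t) (by linarith)
  -- finiteness and positivity
  have hKpos : 0 < K := measure_ball_pos volume 0 one_pos
  have hKlt : K < ⊤ := measure_ball_lt_top
  have hVpos : 0 < V := measure_closedBall_pos volume 0 hρ
  have hVlt : V < ⊤ := measure_closedBall_lt_top
  -- small ball inclusions
  have hsubW1 : W ⊆ B1 := by
    intro x hx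
    rw [hB1, mem_closedBall, dist_eq_norm]
    rw [hWdef, mem_closedBall, dist_eq_norm] at hx
    have hxw : x - (w - s) = (x - w) + s := by abel
    rw [hxw]
    calc ‖x - w + s‖ ≤ ‖x - w‖ + ‖s‖ := norm_add_le _ _
      _ ≤ (ρ - t) + t := add_le_add hx le_rfl
      _ = ρ := by ring
  have hsubW2 : W ⊆ B2 := closedBall_subset_closedBall (by linarith)
  -- real values
  set a := (volume (E ∩ B1)).toReal with ha
  set b := (volume (E ∩ B2)).toReal with hb
  set Vr := V.toReal with hVr
  set Kr := K.toReal with hKr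
  have hKrpos : 0 < Kr := ENNReal.toReal_pos hKpos.ne' hKlt.ne
  have hVrval : Vr = ρ ^ n * Kr := by
    rw [hVr, hVval, ENNReal.toReal_mul, ENNReal.toReal_ofReal (by positivity)]
  have hVrpos : 0 < Vr := by rw [hVrval]; positivity
  set Wr := (volume W).toReal with hWr
  have hWrval : Wr = (ρ - t) ^ n * Kr := by
    rw [hWr, hWval, ENNReal.toReal_mul,
      ENNReal.toReal_ofReal (pow_nonneg (by linarith) n)]
  have hfin1 : volume (E ∩ B1) ≠ ⊤ :=
    ((measure_mono Set.inter_subset_right).trans_lt (hB1V ▸ hVlt)).ne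
  have hfin2 : volume (E ∩ B2) ≠ ⊤ :=
    ((measure_mono Set.inter_subset_right).trans_lt (hB2V ▸ hVlt)).ne
  have hWfin : volume W ≠ ⊤ := measure_closedBall_lt_top.ne
  -- the one-sided inequality, stated generically
  have hle : ∀ Ba Bb : Set (EuclideanSpace ℝ (Fin n)), volume Ba = V → volume Bb = V →
      W ⊆ Ba → W ⊆ Bb → volume (E ∩ Ba) ≠ ⊤ → volume (E ∩ Bb) ≠ ⊤ →
      (volume (E ∩ Ba)).toReal ≤ (volume (E ∩ Bb)).toReal + (Vr - Wr) := by
    intro Ba Bb hBaV hBbV hWa hWb hfa hfb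
    have hdiffval : volume (Ba \ W) = volume Ba - volume W :=
      measure_diff hWa measurableSet_closedBall.nullMeasurableSet hWfin
    have hdfin : volume (Ba \ W) ≠ ⊤ := by
      rw [hdiffval]
      exact (tsub_le_self.trans_lt (hBaV ▸ hVlt)).ne
    have hWleV : volume W ≤ volume Ba := measure_mono hWa
    have hdiffr : (volume (Ba \ W)).toReal = Vr - Wr := by
      rw [hdiffval, ENNReal.toReal_sub_of_le hWleV (hBaV ▸ hVlt.ne), hBaV]
    have hincl : E ∩ Ba ⊆ (E ∩ Bb) ∪ (Ba \ W) := by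
      rintro x ⟨hxE, hxa⟩
      by_cases hxb : x ∈ Bb
      · exact Or.inl ⟨hxE, hxb⟩
      · exact Or.inr ⟨hxa, fun hxW => hxb (hWb hxW)⟩
    have hm : volume (E ∩ Ba) ≤ volume (E ∩ Bb) + volume (Ba \ W) :=
      (measure_mono hincl).trans (measure_union_le _ _)
    have := ENNReal.toReal_mono (by simp [ENNReal.add_ne_top, hfb, hdfin]) hm
    rwa [ENNReal.toReal_add hfb hdfin, hdiffr] at this
  have habs : |a - b| ≤ Vr - Wr := by
    rw [abs_sub_le_iff]
    constructor
    · linarith [hle B1 B2 hB1V hB2V hsubW1 hsubW2 hfin1 hfin2]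
    · linarith [hle B2 B1 hB2V hB1V hsubW2 hsubW1 hfin2 hfin1]
  -- rewrite the goal in real terms
  have hgoal : |(V⁻¹ * volume (E ∩ B1)).toReal - (V⁻¹ * volume (E ∩ B2)).toReal|
      = Vr⁻¹ * |a - b| := by
    rw [ENNReal.toReal_mul, ENNReal.toReal_mul, ENNReal.toReal_inv, ← hVr, ← ha, ← hb,
      ← mul_sub, abs_mul, abs_of_nonneg (by positivity : (0:ℝ) ≤ Vr⁻¹)]
  rw [hgoal]
  -- Bernoulli-based bound
  set x := t / ρ with hx
  have hx0 : 0 ≤ x := by positivity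
  have hx1 : x ≤ 1 / (n:ℝ)^2 := by
    rw [hx, div_le_div_iff₀ hρ (by positivity)]
    linarith
  have hxle1 : x ≤ 1 := hx1.trans (by rw [div_le_one (by positivity)]; linarith)
  have hber : 1 - (n:ℝ) * x ≤ (1 - x)^n := by
    have h := one_add_mul_le_pow (a := -x) (by linarith) n
    rw [mul_neg, ← sub_eq_add_neg, ← sub_eq_add_neg] at h
    exact h
  have hratio : Vr⁻¹ * (Vr - Wr) = 1 - (1 - x)^n := by
    have h1x : (1:ℝ) - x = (ρ - t) / ρ := by rw [hx]; field_simp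
    rw [h1x, div_pow, hVrval, hWrval]
    field_simp
  calc Vr⁻¹ * |a - b| ≤ Vr⁻¹ * (Vr - Wr) := by
        apply mul_le_mul_of_nonneg_left habs (by positivity)
    _ = 1 - (1 - x)^n := hratio
    _ ≤ (n:ℝ) * x := by linarith
    _ ≤ (n:ℝ) * (1 / (n:ℝ)^2) := mul_le_mul_of_nonneg_left hx1 (by positivity)
    _ = 1 / (n:ℝ) := by field_simp
end
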